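/- For all positive integers n and k, and any x, (-1)^n Ĉh_n^{(k)}(x)/n! = Σ_{m=1}^{n} binomial(n-1, n-m) Ch_m^{(k)}(-x)/m!, an inversion relation between Changhee polynomials of the first and second kind of order k. -/

import Mathlib

open PowerSeries Finset

/-- Higher-order Changhee numbers of the first kind. -/
noncomputable def Ch (k n : ℕ) : ℚ := (-1/2)^n * n.factorial * ((n+k-1).choose n)

/-- Signed Stirling numbers of the first kind, via coefficients of the falling factorial. -/
noncomputable def stirling1 (n l : ℕ) : ℚ :=
  (∏ i ∈ Finset.range n, (Polynomial.X - (i : Polynomial ℚ))).coeff l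

/-- Stirling numbers of the second kind, via (e^t-1)^n = n! Σ S₂(m,n) t^m/m!. -/
noncomputable def stirling2 (m n : ℕ) : ℚ :=
  (m.factorial : ℚ) / n.factorial * PowerSeries.coeff m ((PowerSeries.exp ℚ - 1)^n)

/-- Higher-order Euler numbers, from (2/(e^t+1))^k. -/
noncomputable def EulerN (k l : ℕ) : ℚ :=
  l.factorial * PowerSeries.coeff l ((2 * (PowerSeries.exp ℚ + 1)⁻¹)^k)

/-- Higher-order Euler polynomials, from (2/(e^t+1))^k e^{xt}. -/
noncomputable def EulerP (k : ℕ) (x : ℚ) (l : ℕ) : ℚ :=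
  l.factorial * PowerSeries.coeff l
    ((2 * (PowerSeries.exp ℚ + 1)⁻¹)^k * PowerSeries.rescale x (PowerSeries.exp ℚ))

/-- Generalized binomial coefficient. -/
noncomputable def gbinom (x : ℚ) (m : ℕ) : ℚ := (∏ i ∈ Finset.range m, (x - i)) / m.factorial

/-- Binomial series (1+t)^x. -/
noncomputable def onePlusXPow (x : ℚ) : PowerSeries ℚ := PowerSeries.mk fun m => gbinom x m

/-- Higher-order Changhee polynomials of the first kind, from (2/(2+t))^k (1+t)^x. -/
noncomputable def ChP (k : ℕ) (x : ℚ) (n : ℕ) : ℚ :=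
  n.factorial * PowerSeries.coeff n
    ((2 * (2 + PowerSeries.X : PowerSeries ℚ)⁻¹)^k * onePlusXPow x)

/-- Higher-order Changhee numbers of the second kind, from (2/(2+t))^k (1+t)^k. -/
noncomputable def ChhN (k n : ℕ) : ℚ :=
  n.factorial * PowerSeries.coeff n
    ((2 * (2 + PowerSeries.X : PowerSeries ℚ)⁻¹)^k * (1 + PowerSeries.X)^k)

/-- Higher-order Changhee polynomials of the second kind, from (2/(2+t))^k (1+t)^{x+k}. -/
noncomputable def ChP2 (k : ℕ) (x : ℚ) (n : ℕ) : ℚ :=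
  n.factorial * PowerSeries.coeff n
    ((2 * (2 + PowerSeries.X : PowerSeries ℚ)⁻¹)^k * onePlusXPow (x + k))

/-!
The substitution `t ↦ s = -t/(1+t)` satisfies `1 + s = (1+t)⁻¹` and `2 + s = (2+t)/(1+t)`, so it
sends the generating function `(2/(2+t))^k (1+t)^(-x)` of `Ch_n^(k)(-x)` to the generating
function `(2/(2+t))^k (1+t)^(x+k)` of `Ĉh_n^(k)(x)`. On the other hand
`s^m = (-1)^m t^m (1+t)^(-m)`, and the reflection formula `binom(-m, j) = (-1)^j binom(m+j-1, j)`
shows that for every power series `f` the `n`-th coefficient of `f ∘ s` is `(-1)^n` times that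
of `f · (1+t)^(n-1)`. Taking `f` the first generating function, the latter coefficient is the
right-hand side.
-/

lemma Int.negOnePow_smul_eq_neg_one_pow_mul {R : Type*} [Ring R] (j : ℕ) (a : R) :
    Int.negOnePow j • a = (-1) ^ j * a := by
  rw [Units.smul_def, zsmul_eq_mul, Int.cast_negOnePow_natCast]

namespace PowerSeries

section Semiring

variable {R : Type*} [Semiring R]

lemma coeff_one_add_X_pow (d n : ℕ) :
    coeff n ((1 + X : R⟦X⟧) ^ d) = d.choose n := by
  have h : (1 + X : R⟦X⟧) ^ d = ((1 + Polynomial.X) ^ d : Polynomial R) := by simp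
  rw [h, Polynomial.coeff_coe, Polynomial.coeff_one_add_X_pow]

lemma coeff_mul_one_add_X_pow (f : R⟦X⟧) (d n : ℕ) :
    coeff n (f * (1 + X) ^ d) = ∑ m ∈ range (n + 1), coeff m f * (d.choose (n - m) : R) := by
  simp only [coeff_mul, Nat.sum_antidiagonal_eq_sum_range_succ_mk, coeff_one_add_X_pow]

end Semiring

variable {R : Type*} [CommRing R] [BinomialRing R]

lemma binomialSeries_nsmul (m : ℕ) (r : R) :
    binomialSeries R (m • r) = binomialSeries R r ^ m := by
  induction m with
  | zero => simp
  | succ m ih => rw [succ_nsmul, binomialSeries_add, ih, pow_succ]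

lemma binomialSeries_one : binomialSeries R (1 : R) = 1 + X := by
  simpa using binomialSeries_nat (R := R) (A := R) 1

lemma binomialSeries_neg_one_mul_one_add_X : binomialSeries R (-1 : R) * (1 + X) = 1 := by
  rw [← binomialSeries_one, ← binomialSeries_add, neg_add_cancel, binomialSeries_zero]

noncomputable def negXDivOneAddX : R⟦X⟧ := -X * binomialSeries R (-1 : R)

lemma hasSubst_negXDivOneAddX : HasSubst (negXDivOneAddX : R⟦X⟧) :=
  HasSubst.of_constantCoeff_zero' (by simp [negXDivOneAddX])

lemma negXDivOneAddX_pow (m : ℕ) :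
    (negXDivOneAddX : R⟦X⟧) ^ m = C ((-1) ^ m) * (X ^ m * binomialSeries R (-m : R)) := by
  rw [negXDivOneAddX, mul_pow, neg_pow, ← binomialSeries_nsmul, nsmul_eq_mul, mul_neg_one,
    map_pow, map_neg, map_one, mul_assoc]

lemma coeff_negXDivOneAddX_pow {m n : ℕ} (h : m ≤ n) :
    coeff n ((negXDivOneAddX : R⟦X⟧) ^ m) = (-1) ^ n * Ring.choose ((n : R) - 1) (n - m) := by
  obtain ⟨j, rfl⟩ := Nat.exists_eq_add_of_le h
  rw [negXDivOneAddX_pow, coeff_C_mul, coeff_X_pow_mul', if_pos h, binomialSeries_coeff,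
    smul_eq_mul, mul_one, Ring.choose_neg, Int.negOnePow_smul_eq_neg_one_pow_mul,
    Nat.add_sub_cancel_left]
  push_cast
  ring_nf

lemma coeff_negXDivOneAddX_pow_of_lt {m n : ℕ} (h : n < m) :
    coeff n ((negXDivOneAddX : R⟦X⟧) ^ m) = 0 := by
  rw [negXDivOneAddX_pow, coeff_C_mul, coeff_X_pow_mul', if_neg (by omega), mul_zero]

lemma coeff_subst_negXDivOneAddX (f : R⟦X⟧) (n : ℕ) :
    coeff n (f.subst (negXDivOneAddX : R⟦X⟧)) =
      (-1) ^ n * coeff n (f * binomialSeries R ((n : R) - 1)) := by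
  have hsupp : (Function.support fun m ↦ coeff m f • coeff n ((negXDivOneAddX : R⟦X⟧) ^ m)) ⊆
      ↑(range (n + 1)) := by
    intro m hm
    by_contra h
    simp only [coe_range, Set.mem_Iio, not_lt] at h
    simp [coeff_negXDivOneAddX_pow_of_lt (show n < m by omega)] at hm
  rw [coeff_subst' hasSubst_negXDivOneAddX, finsum_eq_sum_of_support_subset _ hsupp, coeff_mul,
    Nat.sum_antidiagonal_eq_sum_range_succ_mk, mul_sum]
  refine sum_congr rfl fun m hm ↦ ?_
  rw [coeff_negXDivOneAddX_pow (Nat.lt_succ_iff.mp (mem_range.mp hm)), binomialSeries_coeff,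
    smul_eq_mul, smul_eq_mul, mul_one]
  ring

lemma binomialSeries_subst_negXDivOneAddX (r : R) :
    (binomialSeries R r).subst (negXDivOneAddX : R⟦X⟧) = binomialSeries R (-r) := by
  ext n
  rw [coeff_subst_negXDivOneAddX, ← binomialSeries_add, binomialSeries_coeff,
    binomialSeries_coeff, Ring.choose_neg, Int.negOnePow_smul_eq_neg_one_pow_mul, smul_eq_mul,
    smul_eq_mul, mul_one, mul_one]
  ring_nf

end PowerSeries

lemma gbinom_eq_choose (x : ℚ) (m : ℕ) : gbinom x m = Ring.choose x m := by
  rw [gbinom, Ring.choose_eq_smul, ← Polynomial.aeval_eq_smeval, ← Polynomial.eval_map_algebraMap,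
    descPochhammer_map, descPochhammer_eval_eq_prod_range, smul_eq_mul, div_eq_inv_mul]

lemma onePlusXPow_eq_binomialSeries (x : ℚ) :
    onePlusXPow x = PowerSeries.binomialSeries ℚ x := by
  ext m
  simp [onePlusXPow, gbinom_eq_choose]

lemma ChP_div_factorial (k : ℕ) (x : ℚ) (n : ℕ) :
    ChP k x n / n.factorial =
      coeff n ((2 * (2 + X : ℚ⟦X⟧)⁻¹) ^ k * PowerSeries.binomialSeries ℚ x) := by
  rw [ChP, onePlusXPow_eq_binomialSeries, mul_div_cancel_left₀ _ (by positivity)]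

lemma ChP2_div_factorial (k : ℕ) (x : ℚ) (n : ℕ) :
    ChP2 k x n / n.factorial =
      coeff n ((2 * (2 + X : ℚ⟦X⟧)⁻¹) ^ k * PowerSeries.binomialSeries ℚ (x + k)) := by
  rw [ChP2, onePlusXPow_eq_binomialSeries, mul_div_cancel_left₀ _ (by positivity)]

lemma constantCoeff_two_add_X : constantCoeff (2 + X : ℚ⟦X⟧) ≠ 0 := by
  rw [map_add, map_ofNat, constantCoeff_X]
  norm_num

lemma two_add_X_subst_negXDivOneAddX :
    (2 + X : ℚ⟦X⟧).subst (negXDivOneAddX : ℚ⟦X⟧) =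
      (2 + X) * PowerSeries.binomialSeries ℚ (-1 : ℚ) := by
  rw [← coe_substAlgHom hasSubst_negXDivOneAddX, map_add, map_ofNat, coe_substAlgHom,
    subst_X hasSubst_negXDivOneAddX, negXDivOneAddX]
  linear_combination (-2 : ℚ⟦X⟧) * binomialSeries_neg_one_mul_one_add_X (R := ℚ)

lemma two_mul_inv_two_add_X_subst_negXDivOneAddX :
    (2 * (2 + X : ℚ⟦X⟧)⁻¹).subst (negXDivOneAddX : ℚ⟦X⟧) = 2 * (2 + X)⁻¹ * (1 + X) := by
  have hinv := congrArg (subst (negXDivOneAddX : ℚ⟦X⟧))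
    (PowerSeries.inv_mul_cancel _ constantCoeff_two_add_X)
  have h2 : (2 : ℚ⟦X⟧).subst (negXDivOneAddX : ℚ⟦X⟧) = 2 := by
    rw [← coe_substAlgHom hasSubst_negXDivOneAddX, map_ofNat]
  rw [subst_mul hasSubst_negXDivOneAddX, two_add_X_subst_negXDivOneAddX,
    ← coe_substAlgHom hasSubst_negXDivOneAddX, map_one, coe_substAlgHom] at hinv
  rw [mul_right_comm, eq_mul_inv_iff_mul_eq constantCoeff_two_add_X,
    subst_mul hasSubst_negXDivOneAddX, h2]
  linear_combination (2 * (1 + X) : ℚ⟦X⟧) * hinv -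
    (2 * (2 + X : ℚ⟦X⟧)⁻¹.subst (negXDivOneAddX : ℚ⟦X⟧) * (2 + X)) *
      binomialSeries_neg_one_mul_one_add_X (R := ℚ)

lemma changhee_subst_negXDivOneAddX (k : ℕ) (x : ℚ) :
    ((2 * (2 + X : ℚ⟦X⟧)⁻¹) ^ k * PowerSeries.binomialSeries ℚ (-x)).subst
        (negXDivOneAddX : ℚ⟦X⟧) =
      (2 * (2 + X : ℚ⟦X⟧)⁻¹) ^ k * PowerSeries.binomialSeries ℚ (x + k) := by
  rw [subst_mul hasSubst_negXDivOneAddX, subst_pow hasSubst_negXDivOneAddX,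
    two_mul_inv_two_add_X_subst_negXDivOneAddX, binomialSeries_subst_negXDivOneAddX, neg_neg,
    PowerSeries.binomialSeries_add, PowerSeries.binomialSeries_nat, mul_pow]
  ring

theorem changhee2_poly_inversion_general (n k : ℕ) (hn : 0 < n) (x : ℚ) :
    (-1)^n * ChP2 k x n / n.factorial =
      ∑ m ∈ Finset.Icc 1 n, ((n-1).choose (n-m) : ℚ) * ChP k (-x) m / m.factorial := by
  set G := (2 * (2 + X : ℚ⟦X⟧)⁻¹) ^ k * PowerSeries.binomialSeries ℚ (-x)
  have hB : PowerSeries.binomialSeries ℚ ((n : ℚ) - 1) = (1 + X) ^ (n - 1) := by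
    rw [← Nat.cast_pred hn, PowerSeries.binomialSeries_nat]
  calc (-1) ^ n * ChP2 k x n / n.factorial
      = (-1) ^ n * coeff n (G.subst (negXDivOneAddX : ℚ⟦X⟧)) := by
        rw [mul_div_assoc, ChP2_div_factorial, changhee_subst_negXDivOneAddX]
    _ = ∑ m ∈ range (n + 1), coeff m G * ((n - 1).choose (n - m) : ℚ) := by
        rw [coeff_subst_negXDivOneAddX, hB, coeff_mul_one_add_X_pow, ← mul_assoc, ← mul_pow]
        norm_num
    _ = ∑ m ∈ Icc 1 n, ((n - 1).choose (n - m) : ℚ) * ChP k (-x) m / m.factorial := by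
        rw [Nat.range_succ_eq_Icc_zero, ← insert_Icc_add_one_left_eq_Icc (Nat.zero_le n),
          sum_insert (by simp), Nat.choose_eq_zero_of_lt (by omega : n - 1 < n - 0)]
        simp only [Nat.cast_zero, mul_zero, zero_add]
        refine sum_congr rfl fun m _ ↦ ?_
        rw [mul_div_assoc, ChP_div_factorial, mul_comm]

theorem changhee2_poly_inversion (n k : ℕ) (hn : 0 < n) (hk : 0 < k) (x : ℚ) :
    (-1)^n * ChP2 k x n / n.factorial =
      ∑ m ∈ Finset.Icc 1 n, ((n-1).choose (n-m) : ℚ) * ChP k (-x) m / m.factorial :=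
  changhee2_poly_inversion_general n k hn x
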